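/- With C_i and T_i defined as in the backwards-reachability recursions (C₀ = X, C_{i+1} = {x ∈ X : ∃ u ∈ U, ∀ w ∈ W, Ax+Bu+Ew ∈ C_i}; T₀ = X, T_{i+1} = (T_i ⊖ AⁱEW) ⊕ Aⁱ(−BU)): if T_{i⋆} = ∅ for some i⋆ > 0, then C_i = ∅ for all i ≥ i⋆. -/

import Mathlib

/-! `Aʲ x ∈ T j` for every `x ∈ C i` and `j ≤ i`: a point that can be steered through
`C i, C (i - 1), …` is, after `j` steps of the autonomous dynamics, in `T j`. Writing
`Aᵏ⁺¹ x = (Aᵏ (A x + B u)) + Aᵏ (-B u)`, the first summand survives every disturbance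
`Aᵏ E w` (it lies in `T k ⊖ Aᵏ E W` by induction) and the second lies in `Aᵏ (-B U)`. -/

open Matrix

/-- Minkowski sum. -/
def msum {n : ℕ} (A B : Set (Fin n → ℝ)) : Set (Fin n → ℝ) :=
  {w | ∃ a ∈ A, ∃ b ∈ B, w = a + b}

/-- Minkowski difference. -/
def mdiff {n : ℕ} (A B : Set (Fin n → ℝ)) : Set (Fin n → ℝ) :=
  {x | ∀ b ∈ B, b + x ∈ A}

lemma add_mem_msum {n : ℕ} {S N : Set (Fin n → ℝ)} {a b : Fin n → ℝ} (ha : a ∈ S) (hb : b ∈ N) :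
    a + b ∈ msum S N :=
  ⟨a, ha, b, hb, rfl⟩

lemma pow_succ_mulVec_mem_msum_mdiff {n m p : ℕ}
    (A : Matrix (Fin n) (Fin n) ℝ) (B : Matrix (Fin n) (Fin m) ℝ) (E : Matrix (Fin n) (Fin p) ℝ)
    {U : Set (Fin m → ℝ)} {W : Set (Fin p → ℝ)} {S : Set (Fin n → ℝ)} {k : ℕ}
    {x : Fin n → ℝ} {u : Fin m → ℝ} (hu : u ∈ U)
    (hS : ∀ w ∈ W, (A ^ k) *ᵥ (A *ᵥ x + B *ᵥ u + E *ᵥ w) ∈ S) :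
    (A ^ (k + 1)) *ᵥ x ∈ msum (mdiff S ((A ^ k).mulVec '' (E.mulVec '' W)))
      ((A ^ k).mulVec '' ((fun u => -u) '' (B.mulVec '' U))) := by
  have hsplit : (A ^ (k + 1)) *ᵥ x
      = (A ^ k *ᵥ (A *ᵥ x) + A ^ k *ᵥ (B *ᵥ u)) + A ^ k *ᵥ (-(B *ᵥ u)) := by
    rw [pow_succ, ← mulVec_mulVec, mulVec_neg]
    abel
  rw [hsplit]
  refine add_mem_msum ?_ ⟨_, ⟨_, ⟨u, hu, rfl⟩, rfl⟩, rfl⟩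
  rintro _ ⟨_, ⟨w, hw, rfl⟩, rfl⟩
  simpa only [mulVec_add, add_comm, add_left_comm] using hS w hw

lemma pow_mulVec_mem_of_mem_of_le {n m p : ℕ}
    (A : Matrix (Fin n) (Fin n) ℝ) (B : Matrix (Fin n) (Fin m) ℝ) (E : Matrix (Fin n) (Fin p) ℝ)
    {X : Set (Fin n → ℝ)} {U : Set (Fin m → ℝ)} {W : Set (Fin p → ℝ)}
    {C T : ℕ → Set (Fin n → ℝ)} (hC0 : C 0 = X)
    (hCs : ∀ i, C (i + 1) = {x ∈ X | ∃ u ∈ U, ∀ w ∈ W, A *ᵥ x + B *ᵥ u + E *ᵥ w ∈ C i})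
    (hT0 : T 0 = X)
    (hTs : ∀ i, T (i + 1)
      = msum (mdiff (T i) ((A ^ i).mulVec '' (E.mulVec '' W)))
          ((A ^ i).mulVec '' ((fun u => -u) '' (B.mulVec '' U)))) :
    ∀ i, ∀ x ∈ C i, ∀ j ≤ i, (A ^ j) *ᵥ x ∈ T j := by
  intro i
  induction i with
  | zero =>
    rintro x hx j hj
    obtain rfl : j = 0 := Nat.le_zero.mp hj
    rwa [pow_zero, one_mulVec, hT0, ← hC0]
  | succ i ih =>
    rintro x hx (_ | k) hj <;> rw [hCs] at hx <;> obtain ⟨hxX, u, hu, hw⟩ := hx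
    · rwa [pow_zero, one_mulVec, hT0]
    · rw [hTs]
      exact pow_succ_mulVec_mem_msum_mdiff A B E hu
        fun w hwW => ih _ (hw w hwW) k (Nat.succ_le_succ_iff.mp hj)

theorem C_empty_of_T_empty_general {n m p : ℕ}
    (A : Matrix (Fin n) (Fin n) ℝ) (B : Matrix (Fin n) (Fin m) ℝ)
    (E : Matrix (Fin n) (Fin p) ℝ)
    (X : Set (Fin n → ℝ)) (U : Set (Fin m → ℝ)) (W : Set (Fin p → ℝ))
    (C : ℕ → Set (Fin n → ℝ))
    (hC0 : C 0 = X)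
    (hCs : ∀ i, C (i + 1)
      = {x ∈ X | ∃ u ∈ U, ∀ w ∈ W, A *ᵥ x + B *ᵥ u + E *ᵥ w ∈ C i})
    (T : ℕ → Set (Fin n → ℝ))
    (hT0 : T 0 = X)
    (hTs : ∀ i, T (i + 1)
      = msum (mdiff (T i) ((A ^ i).mulVec '' (E.mulVec '' W)))
          ((A ^ i).mulVec '' ((fun u => -u) '' (B.mulVec '' U))))
    (istar : ℕ) (hempty : T istar = ∅) :
    ∀ i ≥ istar, C i = ∅ := by
  intro i hi
  refine Set.eq_empty_of_forall_notMem fun x hx => ?_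
  simpa only [hempty, Set.mem_empty_iff_false] using pow_mulVec_mem_of_mem_of_le A B E hC0 hCs hT0 hTs i x hx istar hi

/-- With the backwards-reachability recursions for C and T:
    if T_{i⋆} = ∅ for some i⋆ > 0, then C_i = ∅ for all i ≥ i⋆. -/
theorem C_empty_of_T_empty {n m p : ℕ}
    (A : Matrix (Fin n) (Fin n) ℝ) (B : Matrix (Fin n) (Fin m) ℝ)
    (E : Matrix (Fin n) (Fin p) ℝ)
    (X : Set (Fin n → ℝ)) (U : Set (Fin m → ℝ)) (W : Set (Fin p → ℝ))
    (hXne : X.Nonempty) (hXc : IsCompact X) (hXcv : Convex ℝ X)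
    (hUne : U.Nonempty) (hUc : IsCompact U) (hUcv : Convex ℝ U)
    (hWne : W.Nonempty) (hWc : IsCompact W) (hWcv : Convex ℝ W)
    (C : ℕ → Set (Fin n → ℝ))
    (hC0 : C 0 = X)
    (hCs : ∀ i, C (i + 1)
      = {x ∈ X | ∃ u ∈ U, ∀ w ∈ W, A *ᵥ x + B *ᵥ u + E *ᵥ w ∈ C i})
    (T : ℕ → Set (Fin n → ℝ))
    (hT0 : T 0 = X)
    (hTs : ∀ i, T (i + 1)
      = msum (mdiff (T i) ((A ^ i).mulVec '' (E.mulVec '' W)))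
          ((A ^ i).mulVec '' ((fun u => -u) '' (B.mulVec '' U))))
    (istar : ℕ) (histar : 0 < istar) (hempty : T istar = ∅) :
    ∀ i ≥ istar, C i = ∅ :=
  C_empty_of_T_empty_general A B E X U W C hC0 hCs T hT0 hTs istar hempty
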